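/- (Weak type (1,1) bound in the proof of Paley's inequality) Let φ : L^⊥ → (0,∞) satisfy M_φ := sup_{s>0} s · #{κ ∈ L^⊥ : φ(κ) ≥ s} < ∞, and define μ{κ} = φ(κ)². Then for every f ∈ L^1(Ω) and every s > 0: Σ_{κ : |f̂(κ)|/φ(κ) ≥ s} φ(κ)² ≤ 2 M_φ ‖f‖_{L^1(Ω)} / s. -/

import Mathlib

open MeasureTheory Complex Real ENNReal

noncomputable section

/-- The lattice in `ℝ^d` generated by the columns of the matrix `A`, i.e. `A ℤ^d`. -/
def latticeOf {d : ℕ} (A : Matrix (Fin d) (Fin d) ℝ) : Set (Fin d → ℝ) :=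
  {x | ∃ k : Fin d → ℤ, x = A.mulVec (fun i => (k i : ℝ))}

/-- The dual lattice `L^⊥ = {κ : ∀ λ ∈ L, κ·λ ∈ ℤ}`. -/
def dualLattice {d : ℕ} (L : Set (Fin d → ℝ)) : Set (Fin d → ℝ) :=
  {κ | ∀ l ∈ L, ∃ n : ℤ, (∑ i, κ i * l i) = (n : ℝ)}

/-- `Ω` is a (measurable) fundamental domain of `L`: every `x ∈ ℝ^d` is uniquely
`ω + λ` with `ω ∈ Ω`, `λ ∈ L`. -/
def IsFundDomain {d : ℕ} (L Ω : Set (Fin d → ℝ)) : Prop :=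
  MeasurableSet Ω ∧ ∀ x : Fin d → ℝ, ∃! p : (Fin d → ℝ) × (Fin d → ℝ),
    p.1 ∈ Ω ∧ p.2 ∈ L ∧ x = p.1 + p.2

/-- The normalized measure `dx / m(Ω)` on the fundamental domain `Ω`. -/
def normMeasure {d : ℕ} (Ω : Set (Fin d → ℝ)) : Measure (Fin d → ℝ) :=
  (volume Ω)⁻¹ • volume.restrict Ω

/-- The Fourier coefficient `f̂(κ) = (1/m(Ω)) ∫_Ω f(x) e^{-2πi κ·x} dx`. -/
def fourierCoef {d : ℕ} (Ω : Set (Fin d → ℝ)) (f : (Fin d → ℝ) → ℂ)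
    (κ : Fin d → ℝ) : ℂ :=
  ∫ x, f x * Complex.exp (-2 * π * Complex.I * (∑ i, κ i * x i)) ∂(normMeasure Ω)

/-!
Every Fourier coefficient is bounded by the `L¹` norm, so on the set where `|f̂(κ)| ≥ s φ(κ)` the
weight satisfies `φ(κ) ≤ T := ‖f‖₁ / s`. Writing `φ(κ)² = ∫₀^{φ(κ)} 2t dt` and exchanging sum and
integral, the integrand at height `t ∈ (0, T]` is `2t · #{κ : φ(κ) ≥ t} ≤ 2 M_φ`, and it vanishes
for `t > T`; integrating gives `2 M_φ T`.
-/

open Set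

theorem tsum_lintegral_le_lintegral_tsum {α ι : Type*} [MeasurableSpace α] {μ : Measure α}
    {f : ι → α → ℝ≥0∞} (hf : ∀ i, AEMeasurable (f i) μ) :
    ∑' i, ∫⁻ a, f i a ∂μ ≤ ∫⁻ a, ∑' i, f i a ∂μ := by
  rw [ENNReal.tsum_eq_iSup_sum]
  refine iSup_le fun S => ?_
  rw [← lintegral_finsetSum' S fun i _ => hf i]
  exact lintegral_mono fun a => ENNReal.sum_le_tsum S

theorem ofReal_sq_eq_lintegral_indicator_Ioc {a : ℝ} (ha : 0 ≤ a) :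
    ENNReal.ofReal (a ^ 2) = ∫⁻ t, (Ioc 0 a).indicator (fun u => ENNReal.ofReal (2 * u)) t := by
  rw [lintegral_indicator measurableSet_Ioc, ← ofReal_integral_eq_lintegral_ofReal]
  · rw [← intervalIntegral.integral_of_le ha, intervalIntegral.integral_const_mul, integral_id]
    ring_nf
  · exact (continuous_const.mul continuous_id).integrableOn_Ioc
  · filter_upwards [ae_restrict_mem measurableSet_Ioc] with t ht
    have := ht.1
    positivity

section WeakType

variable {ι : Type*} (w : ι → ℝ) {M : ℝ≥0∞}
  (hM : ∀ t : ℝ, 0 < t → ENNReal.ofReal t * ({i | t ≤ w i}.encard : ℝ≥0∞) ≤ M)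
  {T : ℝ} (hT : ∀ i, w i ≤ T)
include hM hT

theorem tsum_indicator_Ioc_le_of_weak_bound (t : ℝ) :
    ∑' i, (Ioc 0 (w i)).indicator (fun u => ENNReal.ofReal (2 * u)) t
      ≤ (Ioc 0 T).indicator (fun _ => 2 * M) t := by
  by_cases htT : t ∈ Ioc 0 T
  · rw [indicator_of_mem htT]
    have ht : 0 < t := htT.1
    calc ∑' i, (Ioc 0 (w i)).indicator (fun u => ENNReal.ofReal (2 * u)) t
        = ∑' i, {i | t ≤ w i}.indicator (fun _ => ENNReal.ofReal (2 * t)) i := by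
          congr 1 with i
          by_cases hti : t ≤ w i
          · rw [indicator_of_mem (show t ∈ Ioc 0 (w i) from ⟨ht, hti⟩),
              indicator_of_mem (show i ∈ {i | t ≤ w i} from hti)]
          · rw [indicator_of_notMem (show t ∉ Ioc 0 (w i) from fun h => hti h.2),
              indicator_of_notMem (show i ∉ {i | t ≤ w i} from hti)]
      _ = {i | t ≤ w i}.encard * ENNReal.ofReal (2 * t) := by
          rw [← tsum_subtype, ENNReal.tsum_set_const]
      _ = 2 * (ENNReal.ofReal t * {i | t ≤ w i}.encard) := by
          rw [ENNReal.ofReal_mul zero_le_two, ENNReal.ofReal_ofNat]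
          ring
      _ ≤ 2 * M := mul_le_mul_right (hM t ht) 2
  · rw [indicator_of_notMem htT]
    refine (ENNReal.tsum_eq_zero.2 fun i => indicator_of_notMem ?_ _).le
    exact fun hti => htT ⟨hti.1, hti.2.trans (hT i)⟩

theorem tsum_ofReal_sq_le_of_weak_bound (hw : ∀ i, 0 ≤ w i) :
    ∑' i, ENNReal.ofReal (w i ^ 2) ≤ 2 * M * ENNReal.ofReal T :=
  calc ∑' i, ENNReal.ofReal (w i ^ 2)
      = ∑' i, ∫⁻ t, (Ioc 0 (w i)).indicator (fun u => ENNReal.ofReal (2 * u)) t :=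
        tsum_congr fun i => ofReal_sq_eq_lintegral_indicator_Ioc (hw i)
    _ ≤ ∫⁻ t, ∑' i, (Ioc 0 (w i)).indicator (fun u => ENNReal.ofReal (2 * u)) t :=
        tsum_lintegral_le_lintegral_tsum fun _ =>
          (measurable_const.mul measurable_id).ennreal_ofReal.indicator
            measurableSet_Ioc |>.aemeasurable
    _ ≤ ∫⁻ t, (Ioc 0 T).indicator (fun _ => 2 * M) t :=
        lintegral_mono (tsum_indicator_Ioc_le_of_weak_bound w hM hT)
    _ = 2 * M * ENNReal.ofReal T := by
        rw [lintegral_indicator_const measurableSet_Ioc, Real.volume_Ioc, sub_zero]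

end WeakType

theorem enorm_fourierCoef_le {d : ℕ} (Ω : Set (Fin d → ℝ)) (f : (Fin d → ℝ) → ℂ)
    (κ : Fin d → ℝ) : ‖fourierCoef Ω f κ‖ₑ ≤ eLpNorm f 1 (normMeasure Ω) := by
  rw [eLpNorm_one_eq_lintegral_enorm]
  refine (enorm_integral_le_lintegral_enorm _).trans_eq (lintegral_congr fun x => ?_)
  have hphase (y : ℝ) : -2 * π * I * y = ↑(-2 * π * y) * I := by
    push_cast
    ring
  rw [enorm_mul, hphase, ← ofReal_norm (cexp _), norm_exp_ofReal_mul_I, ENNReal.ofReal_one,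
    mul_one]

theorem paley_weak_one_one_general {d : ℕ} (A : Matrix (Fin d) (Fin d) ℝ)
    (Ω : Set (Fin d → ℝ))
    (φ : (Fin d → ℝ) → ℝ) (hφ : ∀ κ ∈ dualLattice (latticeOf A), 0 < φ κ)
    (M : ℝ≥0∞)
    (hMb : ∀ s : ℝ, 0 < s →
      ENNReal.ofReal s * ({κ ∈ dualLattice (latticeOf A) | s ≤ φ κ}.encard : ℝ≥0∞) ≤ M)
    (f : (Fin d → ℝ) → ℂ) (hf : MemLp f 1 (normMeasure Ω)) (s : ℝ) (hs : 0 < s) :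
    ∑' κ : {κ ∈ dualLattice (latticeOf A) | s ≤ ‖fourierCoef Ω f κ‖ / φ κ},
        ENNReal.ofReal (φ ↑κ ^ 2)
      ≤ 2 * M * eLpNorm f 1 (normMeasure Ω) / ENNReal.ofReal s := by
  set N := eLpNorm f 1 (normMeasure Ω)
  have hN : N ≠ ⊤ := hf.eLpNorm_ne_top
  have hφ_le : ∀ κ ∈ dualLattice (latticeOf A), s ≤ ‖fourierCoef Ω f κ‖ / φ κ →
      φ κ ≤ N.toReal / s := by
    intro κ hκ hsκ
    have hcoef : ‖fourierCoef Ω f κ‖ ≤ N.toReal := by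
      simpa only [toReal_enorm] using toReal_mono hN (enorm_fourierCoef_le Ω f κ)
    rw [le_div_iff₀ (hφ κ hκ)] at hsκ
    rw [le_div_iff₀ hs]
    linarith
  have hweak : ∀ t : ℝ, 0 < t → ENNReal.ofReal t *
      ({κ : {κ ∈ dualLattice (latticeOf A) | s ≤ ‖fourierCoef Ω f κ‖ / φ κ} | t ≤ φ κ}.encard
        : ℝ≥0∞) ≤ M := by
    intro t ht
    refine le_trans (mul_le_mul_right ?_ _) (hMb t ht)
    rw [← Subtype.val_injective.encard_image]
    exact_mod_cast encard_le_encard (by rintro _ ⟨κ, hκ, rfl⟩; exact ⟨κ.2.1, hκ⟩)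
  calc _ ≤ 2 * M * ENNReal.ofReal (N.toReal / s) :=
        tsum_ofReal_sq_le_of_weak_bound _ hweak (fun κ => hφ_le κ κ.2.1 κ.2.2)
          fun κ => (hφ κ κ.2.1).le
    _ = 2 * M * N / ENNReal.ofReal s := by
        rw [ENNReal.ofReal_div_of_pos hs, ofReal_toReal hN, mul_div_assoc]

theorem paley_weak_one_one {d : ℕ} (A : Matrix (Fin d) (Fin d) ℝ) (hA : IsUnit A.det)
    (Ω : Set (Fin d → ℝ)) (hΩ : IsFundDomain (latticeOf A) Ω)
    (φ : (Fin d → ℝ) → ℝ) (hφ : ∀ κ ∈ dualLattice (latticeOf A), 0 < φ κ)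
    (M : ℝ≥0∞) (hM : M ≠ ⊤)
    (hMb : ∀ s : ℝ, 0 < s →
      ENNReal.ofReal s * ({κ ∈ dualLattice (latticeOf A) | s ≤ φ κ}.encard : ℝ≥0∞) ≤ M)
    (f : (Fin d → ℝ) → ℂ) (hf : MemLp f 1 (normMeasure Ω)) (s : ℝ) (hs : 0 < s) :
    ∑' κ : {κ ∈ dualLattice (latticeOf A) | s ≤ ‖fourierCoef Ω f κ‖ / φ κ},
        ENNReal.ofReal (φ ↑κ ^ 2)
      ≤ 2 * M * eLpNorm f 1 (normMeasure Ω) / ENNReal.ofReal s :=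
  paley_weak_one_one_general A Ω φ hφ M hMb f hf s hs
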